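/- Let C be a category of spaces and G an internal group. If in C every natural transformation α: S^X → S^Y that is a distributive lattice homomorphism equals S^f for a unique f: Y → X (Axiom 5), then the same holds in [G, C] for the Sierpiński object (S, π_2): every natural transformation (S,π_2)^{(Y,b)} → (S,π_2)^{(X,a)} that is a distributive lattice homomorphism is of the form (S,π_2)^f for a unique G-homomorphism f: (X,a) → (Y,b). -/

import Mathlib

open CategoryTheory CategoryTheory.Limits

universe u v

variable {C : Type v} [Category.{v} C] [HasFiniteProducts C]

/-- The presheaf `S^X : Y ↦ C(Y × X, S)`. -/
noncomputable def pow (S X : C) : Cᵒᵖ ⥤ Type v where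
  obj Z := (Opposite.unop Z ⨯ X) ⟶ S
  map f := TypeCat.ofHom fun u => prod.map f.unop (𝟙 X) ≫ u
  map_id Z := by ext u; simp
  map_comp f g := by
    ext u
    show prod.map ((f ≫ g).unop) (𝟙 X) ≫ u
      = prod.map g.unop (𝟙 X) ≫ prod.map f.unop (𝟙 X) ≫ u
    rw [← Category.assoc, prod.map_map]; simp

/-- Contravariant action `S^f : S^Y ⟶ S^X` for `f : X ⟶ Y`. -/
noncomputable def powMap (S : C) {X Y : C} (f : X ⟶ Y) : pow S Y ⟶ pow S X where
  app Z := TypeCat.ofHom fun u => prod.map (𝟙 _) f ≫ u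
  naturality Z W g := by
    ext u
    show prod.map (𝟙 _) f ≫ prod.map g.unop (𝟙 Y) ≫ u
      = prod.map g.unop (𝟙 X) ≫ prod.map (𝟙 _) f ≫ u
    erw [← Category.assoc, ← Category.assoc, prod.map_map, prod.map_map]
    simp

@[simp] lemma powMap_id (S X : C) : powMap S (𝟙 X) = 𝟙 (pow S X) := by
  apply NatTrans.ext; funext Z; ext u; simp [powMap, pow]; rfl

@[simp] lemma powMap_comp (S : C) {X Y Z : C} (f : X ⟶ Y) (g : Y ⟶ Z) :
    powMap S (f ≫ g) = powMap S g ≫ powMap S f := by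
  apply NatTrans.ext; funext W; ext u
  show prod.map (𝟙 _) (f ≫ g) ≫ u = prod.map (𝟙 _) f ≫ prod.map (𝟙 _) g ≫ u
  erw [← Category.assoc, prod.map_map]; simp

/-- The presheaf `Y ↦ Nat(S^X, S^Y)`, i.e. the double exponential `(yS)^{S^X}`
described by its points. -/
noncomputable def doublePresheaf (S X : C) : Cᵒᵖ ⥤ Type v where
  obj Y := pow S X ⟶ pow S (Opposite.unop Y)
  map h := TypeCat.ofHom fun δ => δ ≫ powMap S h.unop
  map_id Y := by ext δ; simp
  map_comp h k := by ext δ; simp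

section LatticeOps

variable {S : C}

/-- Pointwise top element. -/
noncomputable def elTop (top : ⊤_ C ⟶ S) {W : C} : W ⟶ S := terminal.from W ≫ top
/-- Pointwise bottom element. -/
noncomputable def elBot (bot : ⊤_ C ⟶ S) {W : C} : W ⟶ S := terminal.from W ≫ bot
/-- Pointwise binary meet. -/
noncomputable def elMeet (meet : S ⨯ S ⟶ S) {W : C} (u v : W ⟶ S) : W ⟶ S :=
  prod.lift u v ≫ meet
/-- Pointwise binary join. -/
noncomputable def elJoin (join : S ⨯ S ⟶ S) {W : C} (u v : W ⟶ S) : W ⟶ S :=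
  prod.lift u v ≫ join

/-- A natural transformation `S^X ⟶ S^Y` is a distributive lattice homomorphism if it
preserves the (pointwise) finite meets and joins. -/
def IsDLHom (top bot : ⊤_ C ⟶ S) (meet join : S ⨯ S ⟶ S) {X Y : C}
    (α : pow S X ⟶ pow S Y) : Prop :=
  (∀ Z : Cᵒᵖ, α.app Z (elTop top) = elTop top) ∧
  (∀ Z : Cᵒᵖ, α.app Z (elBot bot) = elBot bot) ∧
  (∀ (Z : Cᵒᵖ) (u v : (pow S X).obj Z), α.app Z (elMeet meet u v) = elMeet meet (α.app Z u) (α.app Z v)) ∧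
  (∀ (Z : Cᵒᵖ) (u v : (pow S X).obj Z), α.app Z (elJoin join u v) = elJoin join (α.app Z u) (α.app Z v))

/-- A join semilattice homomorphism `S^X ⟶ S^Y` (preserves `0` and binary joins). -/
def IsJoinHom (bot : ⊤_ C ⟶ S) (join : S ⨯ S ⟶ S) {X Y : C} (α : pow S X ⟶ pow S Y) : Prop :=
  (∀ Z : Cᵒᵖ, α.app Z (elBot bot) = elBot bot) ∧
  (∀ (Z : Cᵒᵖ) (u v : (pow S X).obj Z), α.app Z (elJoin join u v) = elJoin join (α.app Z u) (α.app Z v))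

/-- A meet semilattice homomorphism `S^X ⟶ S^Y` (preserves `1` and binary meets). -/
def IsMeetHom (top : ⊤_ C ⟶ S) (meet : S ⨯ S ⟶ S) {X Y : C} (α : pow S X ⟶ pow S Y) : Prop :=
  (∀ Z : Cᵒᵖ, α.app Z (elTop top) = elTop top) ∧
  (∀ (Z : Cᵒᵖ) (u v : (pow S X).obj Z), α.app Z (elMeet meet u v) = elMeet meet (α.app Z u) (α.app Z v))

/-- Pointwise meet of two natural transformations into `S^X`. -/
noncomputable def meetNat (meet : S ⨯ S ⟶ S) {F : Cᵒᵖ ⥤ Type v} {X : C}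
    (α β : F ⟶ pow S X) : F ⟶ pow S X where
  app Z := TypeCat.ofHom fun u => elMeet meet (α.app Z u) (β.app Z u)
  naturality Z W g := by
    ext u
    have hα := types_congr_hom (α.naturality g) u
    have hβ := types_congr_hom (β.naturality g) u
    simp only [types_comp_apply] at hα hβ
    show elMeet meet (α.app W (F.map g u)) (β.app W (F.map g u))
      = prod.map g.unop (𝟙 X) ≫ elMeet meet (α.app Z u) (β.app Z u)
    rw [hα, hβ]
    show elMeet meet (prod.map g.unop (𝟙 X) ≫ α.app Z u) (prod.map g.unop (𝟙 X) ≫ β.app Z u) = _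
    unfold elMeet
    erw [prod.comp_lift_assoc]

/-- Pointwise join of two natural transformations into `S^X`. -/
noncomputable def joinNat (join : S ⨯ S ⟶ S) {F : Cᵒᵖ ⥤ Type v} {X : C}
    (α β : F ⟶ pow S X) : F ⟶ pow S X where
  app Z := TypeCat.ofHom fun u => elJoin join (α.app Z u) (β.app Z u)
  naturality Z W g := by
    ext u
    have hα := types_congr_hom (α.naturality g) u
    have hβ := types_congr_hom (β.naturality g) u
    simp only [types_comp_apply] at hα hβ
    show elJoin join (α.app W (F.map g u)) (β.app W (F.map g u))
      = prod.map g.unop (𝟙 X) ≫ elJoin join (α.app Z u) (β.app Z u)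
    rw [hα, hβ]
    show elJoin join (prod.map g.unop (𝟙 X) ≫ α.app Z u) (prod.map g.unop (𝟙 X) ≫ β.app Z u) = _
    unfold elJoin
    erw [prod.comp_lift_assoc]

end LatticeOps

/-- The natural transformation `S^{(X+X)+Y} ⟶ S^X` given by
`(u,v,w) ↦ u ⊓ (v ⊔ S^f(w))`, used in the statement of Axiom 7. -/
noncomputable def phiNat {S : C} (meet join : S ⨯ S ⟶ S) [HasBinaryCoproducts C]
    {X Y : C} (f : X ⟶ Y) : pow S ((X ⨿ X) ⨿ Y) ⟶ pow S X :=
  meetNat meet (powMap S ((coprod.inl : X ⟶ X ⨿ X) ≫ coprod.inl))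
    (joinNat join (powMap S ((coprod.inr : X ⟶ X ⨿ X) ≫ coprod.inl))
      (powMap S (coprod.inr : Y ⟶ (X ⨿ X) ⨿ Y) ≫ powMap S f))

noncomputable instance powPartialOrder [∀ A B : C, PartialOrder (A ⟶ B)] (S X : C) (Z : Cᵒᵖ) :
    PartialOrder ((pow S X).obj Z) :=
  inferInstanceAs (PartialOrder (Opposite.unop Z ⨯ X ⟶ S))

/-- A *category of spaces*: an order-enriched category with (order-enriched) finite limits
and finite coproducts (Axiom 1), pullback-stable coproducts (Axiom 2), a Sierpiński object
`S` (Axiom 3) which is double exponentiable (Axiom 4), such that distributive lattice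
homomorphisms between double exponentials are represented by morphisms (Axiom 5),
(de/in)flationary idempotents split in the (upper/lower) power Kleisli categories (Axiom 6),
and `S^(-)` sends equalizers to coequalizers of the appropriate pairs (Axiom 7). -/
class CategoryOfSpaces (C : Type v) [Category.{v} C] [∀ X Y : C, PartialOrder (X ⟶ Y)]
    [HasFiniteLimits C] [HasFiniteCoproducts C] : Type v where
  /-- composition is monotone (order enrichment) -/
  comp_le : ∀ {X Y Z : C} {f f' : X ⟶ Y} {g g' : Y ⟶ Z}, f ≤ f' → g ≤ g' → f ≫ g ≤ f' ≫ g'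
  /-- the universal property of products is order-enriched -/
  lift_le : ∀ {X Y Z : C} {f f' : X ⟶ Y} {g g' : X ⟶ Z}, f ≤ f' → g ≤ g' →
    prod.lift f g ≤ prod.lift f' g'
  /-- Axiom 2: pullback preserves finite coproducts -/
  pullback_preserves_coproducts : ∀ {X Y : C} (f : X ⟶ Y),
    Nonempty (PreservesFiniteCoproducts (Over.pullback f))
  /-- Axiom 3: the Sierpiński object -/
  S : C
  top : ⊤_ C ⟶ S
  bot : ⊤_ C ⟶ S
  meet : S ⨯ S ⟶ S
  join : S ⨯ S ⟶ S
  /-- `1 : 1 ⟶ S` is right adjoint to `! : S ⟶ 1` -/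
  top_adj : 𝟙 S ≤ terminal.from S ≫ top
  /-- `0 : 1 ⟶ S` is left adjoint to `! : S ⟶ 1` -/
  bot_adj : terminal.from S ≫ bot ≤ 𝟙 S
  /-- `⊓` is right adjoint to the diagonal -/
  meet_unit : 𝟙 S ≤ prod.lift (𝟙 S) (𝟙 S) ≫ meet
  meet_counit : meet ≫ prod.lift (𝟙 S) (𝟙 S) ≤ 𝟙 (S ⨯ S)
  /-- `⊔` is left adjoint to the diagonal -/
  join_unit : 𝟙 (S ⨯ S) ≤ join ≫ prod.lift (𝟙 S) (𝟙 S)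
  join_counit : prod.lift (𝟙 S) (𝟙 S) ≫ join ≤ 𝟙 S
  /-- `S` is a distributive lattice -/
  distrib : prod.map (𝟙 S) join ≫ meet
    = prod.lift (prod.map (𝟙 S) prod.fst ≫ meet) (prod.map (𝟙 S) prod.snd ≫ meet) ≫ join
  /-- a morphism into `S` is determined by the pullback of `1` -/
  sierp_top : ∀ {X : C} (a b : X ⟶ S),
    (∀ {T : C} (x : T ⟶ X), x ≫ a = terminal.from T ≫ top ↔ x ≫ b = terminal.from T ≫ top) →
    a = b
  /-- a morphism into `S` is determined by the pullback of `0` -/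
  sierp_bot : ∀ {X : C} (a b : X ⟶ S),
    (∀ {T : C} (x : T ⟶ X), x ≫ a = terminal.from T ≫ bot ↔ x ≫ b = terminal.from T ≫ bot) →
    a = b
  /-- Axiom 4: `S` is double exponentiable -/
  double_exp : ∀ X : C, ∃ P : C, Nonempty (doublePresheaf S X ≅ yoneda.obj P)
  /-- Axiom 5 -/
  ax5 : ∀ {X Y : C} (α : pow S X ⟶ pow S Y), IsDLHom top bot meet join α →
    ∃! f : Y ⟶ X, α = powMap S f
  /-- Axiom 6 (i): inflationary idempotents split in the lower power Kleisli category -/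
  ax6L : ∀ {X : C} (α : pow S X ⟶ pow S X), IsJoinHom bot join α →
    (∀ (Z : Cᵒᵖ) (u : Opposite.unop Z ⨯ X ⟶ S), u ≤ (α.app Z u : Opposite.unop Z ⨯ X ⟶ S)) →
    α ≫ α = α →
    ∃ (X₀ : C) (θ : pow S X₀ ⟶ pow S X) (γ : pow S X ⟶ pow S X₀),
      IsJoinHom bot join θ ∧ IsJoinHom bot join γ ∧ γ ≫ θ = α ∧ θ ≫ γ = 𝟙 (pow S X₀)
  /-- Axiom 6 (ii): deflationary idempotents split in the upper power Kleisli category -/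
  ax6U : ∀ {X : C} (α : pow S X ⟶ pow S X), IsMeetHom top meet α →
    (∀ (Z : Cᵒᵖ) (u : Opposite.unop Z ⨯ X ⟶ S), (α.app Z u : Opposite.unop Z ⨯ X ⟶ S) ≤ u) →
    α ≫ α = α →
    ∃ (X₀ : C) (θ : pow S X₀ ⟶ pow S X) (γ : pow S X ⟶ pow S X₀),
      IsMeetHom top meet θ ∧ IsMeetHom top meet γ ∧ γ ≫ θ = α ∧ θ ≫ γ = 𝟙 (pow S X₀)
  /-- Axiom 7 -/
  ax7 : ∀ {E X Y : C} (e : E ⟶ X) (f g : X ⟶ Y) (w : e ≫ f = e ≫ g),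
    Nonempty (IsLimit (Fork.ofι e w)) →
    phiNat meet join f ≫ powMap S e = phiNat meet join g ≫ powMap S e ∧
    ∀ {W : C} (κ : pow S X ⟶ pow S W), phiNat meet join f ≫ κ = phiNat meet join g ≫ κ →
      ∃! κ' : pow S E ⟶ pow S W, κ = powMap S e ≫ κ'

variable {C : Type v} [Category.{v} C] [∀ X Y : C, PartialOrder (X ⟶ Y)]
  [HasFiniteLimits C] [HasFiniteCoproducts C] [SC : CategoryOfSpaces C]

/-- The Sierpiński object of a category of spaces. -/
noncomputable def Sierp (C : Type v) [Category.{v} C] [∀ X Y : C, PartialOrder (X ⟶ Y)]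
    [HasFiniteLimits C] [HasFiniteCoproducts C] [SC : CategoryOfSpaces C] : C := SC.S

/-- `E` witnesses that `f` is an open map: `E ⊣ S^f` and the Frobenius condition holds. -/
def IsOpenVia {X Y : C} (f : X ⟶ Y) (E : pow (Sierp C) X ⟶ pow (Sierp C) Y) : Prop :=
  (∀ (Z : Cᵒᵖ) (u : Opposite.unop Z ⨯ X ⟶ Sierp C) (v : Opposite.unop Z ⨯ Y ⟶ Sierp C),
      (E.app Z u : Opposite.unop Z ⨯ Y ⟶ Sierp C) ≤ v ↔
        u ≤ ((powMap (Sierp C) f).app Z v : Opposite.unop Z ⨯ X ⟶ Sierp C)) ∧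
  (∀ (Z : Cᵒᵖ) (u : Opposite.unop Z ⨯ X ⟶ Sierp C) (v : Opposite.unop Z ⨯ Y ⟶ Sierp C),
      E.app Z (elMeet SC.meet u ((powMap (Sierp C) f).app Z v))
        = elMeet SC.meet (E.app Z u) v)

/-- A morphism is open if some `∃_f` witnesses it. -/
def IsOpenMor {X Y : C} (f : X ⟶ Y) : Prop := ∃ E, IsOpenVia f E

/-- An object is open if the unique map to the terminal object is open. -/
def IsOpenOb (X : C) : Prop := IsOpenMor (terminal.from X)

/-- `p#` is a triquotient assignment on `p`. -/
def IsTriqAssign {Z Y : C} (p : Z ⟶ Y) (ph : pow (Sierp C) Z ⟶ pow (Sierp C) Y) : Prop :=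
  (∀ (W : Cᵒᵖ) (u : Opposite.unop W ⨯ Z ⟶ Sierp C) (v : Opposite.unop W ⨯ Y ⟶ Sierp C),
      elMeet SC.meet (ph.app W u) v
        ≤ (ph.app W (elMeet SC.meet u ((powMap (Sierp C) p).app W v))
            : Opposite.unop W ⨯ Y ⟶ Sierp C)) ∧
  (∀ (W : Cᵒᵖ) (u : Opposite.unop W ⨯ Z ⟶ Sierp C) (v : Opposite.unop W ⨯ Y ⟶ Sierp C),
      (ph.app W (elJoin SC.join u ((powMap (Sierp C) p).app W v))
          : Opposite.unop W ⨯ Y ⟶ Sierp C) ≤ elJoin SC.join (ph.app W u) v)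

/-- `p` is a triquotient surjection. -/
def IsTriqSurj {Z Y : C} (p : Z ⟶ Y) : Prop :=
  ∃ ph, IsTriqAssign p ph ∧ powMap (Sierp C) p ≫ ph = 𝟙 (pow (Sierp C) Y)

/-- An internal group in a category with finite products. -/
structure GroupObject (C : Type u) [Category.{v} C] [HasFiniteProducts C] where
  G : C
  m : G ⨯ G ⟶ G
  e : ⊤_ C ⟶ G
  i : G ⟶ G
  mul_assoc : prod.map m (𝟙 G) ≫ m = (prod.associator G G G).hom ≫ prod.map (𝟙 G) m ≫ m
  one_mul : prod.lift (terminal.from G ≫ e) (𝟙 G) ≫ m = 𝟙 G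
  mul_one : prod.lift (𝟙 G) (terminal.from G ≫ e) ≫ m = 𝟙 G
  inv_mul : prod.lift i (𝟙 G) ≫ m = terminal.from G ≫ e
  mul_inv : prod.lift (𝟙 G) i ≫ m = terminal.from G ≫ e

variable (Gr : GroupObject C)

/-- A `G`-object: an object with a `G`-action. -/
structure GObject (Gr : GroupObject C) where
  X : C
  act : Gr.G ⨯ X ⟶ X
  act_one : prod.lift (terminal.from X ≫ Gr.e) (𝟙 X) ≫ act = 𝟙 X
  act_mul : prod.map (𝟙 Gr.G) act ≫ act
    = (prod.associator Gr.G Gr.G X).inv ≫ prod.map Gr.m (𝟙 X) ≫ act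

/-- A `G`-equivariant morphism. -/
@[ext]
structure GHom (A B : GObject Gr) where
  f : A.X ⟶ B.X
  equivariant : A.act ≫ f = prod.map (𝟙 Gr.G) f ≫ B.act

instance : Category (GObject Gr) where
  Hom A B := GHom Gr A B
  id A := ⟨𝟙 A.X, by simp⟩
  comp {A B D} u v := ⟨u.f ≫ v.f, by
    rw [← Category.assoc, u.equivariant, Category.assoc, v.equivariant,
      ← Category.assoc, prod.map_map]
    simp⟩
  id_comp u := by apply GHom.ext; simp
  comp_id u := by apply GHom.ext; simp
  assoc u v w := by apply GHom.ext; simp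

@[simp] lemma GHom.id_f (A : GObject Gr) : (𝟙 A : A ⟶ A).f = 𝟙 A.X := rfl
@[simp] lemma GHom.comp_f {A B D : GObject Gr} (u : A ⟶ B) (v : B ⟶ D) :
    (u ≫ v).f = u.f ≫ v.f := rfl

/-- The diagonal action on the product of the underlying objects of two `G`-objects. -/
noncomputable def productAction (Z Xa : GObject Gr) :
    Gr.G ⨯ (Z.X ⨯ Xa.X) ⟶ Z.X ⨯ Xa.X :=
  prod.lift (prod.map (𝟙 Gr.G) prod.fst ≫ Z.act) (prod.map (𝟙 Gr.G) prod.snd ≫ Xa.act)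

lemma productAction_natural_left {Z W : GObject Gr} (g : W ⟶ Z) (Xa : GObject Gr) :
    prod.map (𝟙 Gr.G) (prod.map g.f (𝟙 Xa.X)) ≫ productAction Gr Z Xa
      = productAction Gr W Xa ≫ prod.map g.f (𝟙 Xa.X) := by
  unfold productAction
  apply Limits.prod.hom_ext
  · simp only [Category.assoc, prod.map_fst, prod.lift_fst, prod.lift_fst_assoc,
      prod.map_fst_assoc]
    rw [g.equivariant, ← Category.assoc, ← Category.assoc, prod.map_map, prod.map_map]
    simp
  · simp only [Category.assoc, prod.map_snd, prod.lift_snd, prod.lift_snd_assoc,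
      prod.map_snd_assoc]
    rw [← Category.assoc, prod.map_map]
    simp

lemma productAction_natural_right (Z : GObject Gr) {Xa Xb : GObject Gr} (k : Xa ⟶ Xb) :
    prod.map (𝟙 Gr.G) (prod.map (𝟙 Z.X) k.f) ≫ productAction Gr Z Xb
      = productAction Gr Z Xa ≫ prod.map (𝟙 Z.X) k.f := by
  unfold productAction
  apply Limits.prod.hom_ext
  · simp only [Category.assoc, prod.map_fst, prod.lift_fst, prod.lift_fst_assoc,
      prod.map_fst_assoc]
    rw [← Category.assoc, prod.map_map]
    simp
  · simp only [Category.assoc, prod.map_snd, prod.lift_snd, prod.lift_snd_assoc,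
      prod.map_snd_assoc]
    rw [k.equivariant, ← Category.assoc, ← Category.assoc, prod.map_map, prod.map_map]
    simp

/-- The object of `G`-equivariant maps `(S,π₂)^{(X,a)}` as a presheaf on `[G,C]`,
where `S` carries the trivial action. -/
noncomputable def gpow (S : C) (Xa : GObject Gr) : (GObject Gr)ᵒᵖ ⥤ Type v where
  obj Z := { u : (Opposite.unop Z).X ⨯ Xa.X ⟶ S //
      productAction Gr (Opposite.unop Z) Xa ≫ u = prod.snd ≫ u }
  map {Z W} g := TypeCat.ofHom fun u => ⟨prod.map g.unop.f (𝟙 Xa.X) ≫ u.1, by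
    rw [← Category.assoc, ← productAction_natural_left, Category.assoc, u.2,
      ← Category.assoc, prod.map_snd, Category.assoc]⟩
  map_id Z := by ext u; simp
  map_comp f g := by
    ext u
    show prod.map (g.unop.f ≫ f.unop.f) (𝟙 Xa.X) ≫ u.1
      = prod.map g.unop.f (𝟙 Xa.X) ≫ prod.map f.unop.f (𝟙 Xa.X) ≫ u.1
    rw [← Category.assoc, prod.map_map]; simp

/-- Contravariant action of a `G`-homomorphism on `gpow`. -/
noncomputable def gpowMap (S : C) {Xa Xb : GObject Gr} (k : Xa ⟶ Xb) :
    gpow Gr S Xb ⟶ gpow Gr S Xa where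
  app Z := TypeCat.ofHom fun u => ⟨prod.map (𝟙 (Opposite.unop Z).X) k.f ≫ u.1, by
    rw [← Category.assoc, ← productAction_natural_right, Category.assoc, u.2,
      ← Category.assoc, prod.map_snd, Category.assoc]⟩
  naturality Z W g := by
    ext u; apply Subtype.ext
    show prod.map (𝟙 _) k.f ≫ prod.map g.unop.f (𝟙 Xb.X) ≫ u.1
      = prod.map g.unop.f (𝟙 Xa.X) ≫ prod.map (𝟙 _) k.f ≫ u.1
    rw [← Category.assoc, ← Category.assoc, prod.map_map, prod.map_map]
    simp

variable {Gr : GroupObject C}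

/-- Pointwise meet of equivariant maps (the meet of `(S, π₂)` in `[G,C]`). -/
noncomputable def gMeet (Xa : GObject Gr) (Z : (GObject Gr)ᵒᵖ)
    (u v : (gpow Gr (Sierp C) Xa).obj Z) : (gpow Gr (Sierp C) Xa).obj Z :=
  ⟨elMeet SC.meet u.1 v.1, by
    unfold elMeet
    erw [← Category.assoc, prod.comp_lift, u.2, v.2, ← prod.comp_lift, Category.assoc]
    rfl⟩

/-- `E` witnesses openness of a `G`-homomorphism `f` relative to `[G, C]`:
`E ⊣ (S,π₂)^f` with the Frobenius condition. -/
def GIsOpenVia {Xa Yb : GObject Gr} (f : Xa ⟶ Yb)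
    (E : gpow Gr (Sierp C) Xa ⟶ gpow Gr (Sierp C) Yb) : Prop :=
  (∀ (Z : (GObject Gr)ᵒᵖ) (u : (gpow Gr (Sierp C) Xa).obj Z)
      (v : (gpow Gr (Sierp C) Yb).obj Z),
      (E.app Z u).1 ≤ v.1 ↔ u.1 ≤ ((gpowMap Gr (Sierp C) f).app Z v).1) ∧
  (∀ (Z : (GObject Gr)ᵒᵖ) (u : (gpow Gr (Sierp C) Xa).obj Z)
      (v : (gpow Gr (Sierp C) Yb).obj Z),
      E.app Z (gMeet Xa Z u ((gpowMap Gr (Sierp C) f).app Z v)) = gMeet Yb Z (E.app Z u) v)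

/-- Pointwise join of equivariant maps. -/
noncomputable def gJoin (Xa : GObject Gr) (Z : (GObject Gr)ᵒᵖ)
    (u v : (gpow Gr (Sierp C) Xa).obj Z) : (gpow Gr (Sierp C) Xa).obj Z :=
  ⟨elJoin SC.join u.1 v.1, by
    unfold elJoin
    erw [← Category.assoc, prod.comp_lift, u.2, v.2, ← prod.comp_lift, Category.assoc]
    rfl⟩

/-- The top equivariant map. -/
noncomputable def gTop (Xa : GObject Gr) (Z : (GObject Gr)ᵒᵖ) :
    (gpow Gr (Sierp C) Xa).obj Z :=
  ⟨elTop SC.top, by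
    unfold elTop
    erw [← Category.assoc, ← Category.assoc]
    congr 1
    apply Subsingleton.elim⟩

/-- The bottom equivariant map. -/
noncomputable def gBot (Xa : GObject Gr) (Z : (GObject Gr)ᵒᵖ) :
    (gpow Gr (Sierp C) Xa).obj Z :=
  ⟨elBot SC.bot, by
    unfold elBot
    erw [← Category.assoc, ← Category.assoc]
    congr 1
    apply Subsingleton.elim⟩

/-- A natural transformation between the `[G,C]`-presheaves `(S,π₂)^{(-)}` is a
distributive lattice homomorphism if it preserves finite meets and joins pointwise. -/
def GIsDLHom {Ya Xa : GObject Gr}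
    (ε : gpow Gr (Sierp C) Ya ⟶ gpow Gr (Sierp C) Xa) : Prop :=
  (∀ Z, ε.app Z (gTop Ya Z) = gTop Xa Z) ∧
  (∀ Z, ε.app Z (gBot Ya Z) = gBot Xa Z) ∧
  (∀ Z u v, ε.app Z (gMeet Ya Z u v) = gMeet Xa Z (ε.app Z u) (ε.app Z v)) ∧
  (∀ Z u v, ε.app Z (gJoin Ya Z u v) = gJoin Xa Z (ε.app Z u) (ε.app Z v))


/-!
Equivariant maps `(G ⨯ Z) ⨯ Y ⟶ S` out of a free `G`-object `G ⨯ Z` correspond to plain maps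
`Z ⨯ Y ⟶ S`: restrict along `g = 1`, and extend by `((g, z), y) ↦ (z, g⁻¹ y)`. Evaluating `ε` on
free `G`-objects therefore yields a natural transformation `δ : S^Y ⟶ S^X` on `C`, again a
distributive lattice homomorphism, so Axiom 5 in `C` gives `δ = S^f`. Naturality of `ε` along the
multiplication `G ⨯ (G ⨯ Z) ⟶ G ⨯ Z` yields `S^(f ∘ a) = S^(b ∘ (G ⨯ f))`, hence `f` is
equivariant by the uniqueness part of Axiom 5; naturality along the action `G ⨯ Z ⟶ Z` of an
arbitrary `G`-object then shows `ε = (S, π₂)^f`. Uniqueness holds because `(S, π₂)^k`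
restricts to `δ = S^k`.
-/

attribute [local simp] prod.lift_fst prod.lift_snd prod.lift_fst_assoc prod.lift_snd_assoc

section GroupObjectCalculus

variable {C : Type v} [Category.{v} C] [HasFiniteLimits C] {Gr : GroupObject C}

noncomputable def gmul {T : C} (x y : T ⟶ Gr.G) : T ⟶ Gr.G := prod.lift x y ≫ Gr.m
noncomputable def gone (Gr : GroupObject C) (T : C) : T ⟶ Gr.G := terminal.from T ≫ Gr.e
noncomputable def ginv {T : C} (x : T ⟶ Gr.G) : T ⟶ Gr.G := x ≫ Gr.i
noncomputable def gact {T : C} (A : GObject Gr) (x : T ⟶ Gr.G) (w : T ⟶ A.X) : T ⟶ A.X :=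
  prod.lift x w ≫ A.act

@[simp] lemma comp_gmul {T' T : C} (c : T' ⟶ T) (x y : T ⟶ Gr.G) :
    c ≫ gmul x y = gmul (c ≫ x) (c ≫ y) := by
  simp [gmul, prod.comp_lift_assoc]

@[simp] lemma comp_gone {T' T : C} (c : T' ⟶ T) : c ≫ gone Gr T = gone Gr T' := by
  simp [gone, ← Category.assoc]

@[simp] lemma comp_ginv {T' T : C} (c : T' ⟶ T) (x : T ⟶ Gr.G) :
    c ≫ ginv x = ginv (c ≫ x) := by simp [ginv]

@[simp] lemma comp_gact {T' T : C} (A : GObject Gr) (c : T' ⟶ T) (x : T ⟶ Gr.G)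
    (w : T ⟶ A.X) : c ≫ gact A x w = gact A (c ≫ x) (c ≫ w) := by
  simp [gact, prod.comp_lift_assoc]

@[simp] lemma comp_gact_assoc {T' T : C} (A : GObject Gr) (c : T' ⟶ T) (x : T ⟶ Gr.G)
    (w : T ⟶ A.X) {W : C} (t : A.X ⟶ W) :
    c ≫ gact A x w ≫ t = gact A (c ≫ x) (c ≫ w) ≫ t := by
  rw [← Category.assoc, comp_gact]

lemma gmul_assoc {T : C} (x y z : T ⟶ Gr.G) :
    gmul (gmul x y) z = gmul x (gmul y z) := by
  simpa [gmul, prod.lift_map_assoc, prod.comp_lift_assoc, Limits.prod.associator] using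
    prod.lift (prod.lift x y) z ≫= Gr.mul_assoc

lemma gone_mul {T : C} (x : T ⟶ Gr.G) : gmul (gone Gr T) x = x := by
  simpa [gmul, gone, prod.comp_lift_assoc, ← Category.assoc, terminal.comp_from] using
    x ≫= Gr.one_mul

lemma gmul_one {T : C} (x : T ⟶ Gr.G) : gmul x (gone Gr T) = x := by
  simpa [gmul, gone, prod.comp_lift_assoc, ← Category.assoc, terminal.comp_from] using
    x ≫= Gr.mul_one

lemma ginv_mul {T : C} (x : T ⟶ Gr.G) : gmul (ginv x) x = gone Gr T := by
  simpa [gmul, ginv, gone, prod.comp_lift_assoc, ← Category.assoc, terminal.comp_from] using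
    x ≫= Gr.inv_mul

lemma gmul_inv {T : C} (x : T ⟶ Gr.G) : gmul x (ginv x) = gone Gr T := by
  simpa [gmul, ginv, gone, prod.comp_lift_assoc, ← Category.assoc, terminal.comp_from] using
    x ≫= Gr.mul_inv

lemma ginv_gmul {T : C} (x y : T ⟶ Gr.G) : ginv (gmul x y) = gmul (ginv y) (ginv x) := by
  have h : gmul (gmul (ginv y) (ginv x)) (gmul x y) = gone Gr T := by
    rw [gmul_assoc, ← gmul_assoc (ginv x), ginv_mul, gone_mul, ginv_mul]
  calc ginv (gmul x y) = gmul (gone Gr T) (ginv (gmul x y)) := (gone_mul _).symm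
    _ = gmul (gmul (ginv y) (ginv x)) (gmul (gmul x y) (ginv (gmul x y))) := by
        rw [← h, gmul_assoc]
    _ = gmul (ginv y) (ginv x) := by rw [gmul_inv, gmul_one]

lemma ginv_ginv {T : C} (x : T ⟶ Gr.G) : ginv (ginv x) = x := by
  calc ginv (ginv x) = gmul (ginv (ginv x)) (gmul (ginv x) x) := by rw [ginv_mul, gmul_one]
    _ = x := by rw [← gmul_assoc, ginv_mul, gone_mul]

lemma ginv_gone {T : C} : ginv (gone Gr T) = gone Gr T := by
  simpa only [gmul_one] using ginv_mul (gone Gr T)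

lemma gact_gact {T : C} (A : GObject Gr) (x y : T ⟶ Gr.G) (w : T ⟶ A.X) :
    gact A x (gact A y w) = gact A (gmul x y) w := by
  simpa [gact, gmul, prod.lift_map_assoc, prod.comp_lift_assoc, Limits.prod.associator] using
    prod.lift x (prod.lift y w) ≫= A.act_mul

lemma gact_one {T : C} (A : GObject Gr) (w : T ⟶ A.X) : gact A (gone Gr T) w = w := by
  simpa [gact, gone, prod.comp_lift_assoc, ← Category.assoc, terminal.comp_from] using
    w ≫= A.act_one

-- Declared after the proofs above, which unfold these operations, so that `simp` does not loop.
@[simp] lemma lift_m {T : C} (x y : T ⟶ Gr.G) : prod.lift x y ≫ Gr.m = gmul x y := rfl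
@[simp] lemma comp_i {T : C} (x : T ⟶ Gr.G) : x ≫ Gr.i = ginv x := rfl
@[simp] lemma from_e (T : C) : terminal.from T ≫ Gr.e = gone Gr T := rfl
@[simp] lemma lift_act {T : C} (A : GObject Gr) (x : T ⟶ Gr.G) (w : T ⟶ A.X) :
    prod.lift x w ≫ A.act = gact A x w := rfl

lemma comp_act {T : C} (A : GObject Gr) (c : T ⟶ Gr.G ⨯ A.X) :
    c ≫ A.act = gact A (c ≫ prod.fst) (c ≫ prod.snd) := by
  rw [← lift_act, ← prod.comp_lift, prod.lift_fst_snd, Category.comp_id]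

lemma map_eq_lift {W X Y Z : C} (f : W ⟶ Y) (g : X ⟶ Z) :
    prod.map f g = prod.lift (prod.fst ≫ f) (prod.snd ≫ g) :=
  (prod.lift_fst_comp_snd_comp f g).symm

end GroupObjectCalculus

section FreeGObject

variable {C : Type v} [Category.{v} C] [HasFiniteLimits C] (Gr : GroupObject C)

noncomputable def freeAct (Z : C) : Gr.G ⨯ (Gr.G ⨯ Z) ⟶ Gr.G ⨯ Z :=
  prod.lift (gmul prod.fst (prod.snd ≫ prod.fst)) (prod.snd ≫ prod.snd)

@[reducible] noncomputable def freeObj (Z : C) : GObject Gr where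
  X := Gr.G ⨯ Z
  act := freeAct Gr Z
  act_one := by
    apply Limits.prod.hom_ext <;> simp [freeAct, gone_mul]
  act_mul := by
    apply Limits.prod.hom_ext <;>
      simp [freeAct, map_eq_lift, Limits.prod.associator, gmul_assoc]

noncomputable def freeMap {W Z : C} (g : W ⟶ Z) : freeObj Gr W ⟶ freeObj Gr Z where
  f := prod.map (𝟙 Gr.G) g
  equivariant := by
    apply Limits.prod.hom_ext <;> simp [freeObj, freeAct, map_eq_lift]

noncomputable def freeMulHom (Z : C) : freeObj Gr (Gr.G ⨯ Z) ⟶ freeObj Gr Z where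
  f := freeAct Gr Z
  equivariant := by
    apply Limits.prod.hom_ext <;>
      simp [freeObj, freeAct, map_eq_lift, gmul_assoc]

noncomputable def actHom (A : GObject Gr) : freeObj Gr A.X ⟶ A where
  f := A.act
  equivariant := by simp [freeObj, freeAct, map_eq_lift, gact_gact, comp_act]

noncomputable def insertOne (Z W : C) : Z ⨯ W ⟶ (Gr.G ⨯ Z) ⨯ W :=
  prod.map (prod.lift (gone Gr Z) (𝟙 Z)) (𝟙 W)

/-- `((g, z), x) ↦ (z, g⁻¹ x)`. Precomposition with it turns maps out of `Z ⨯ A.X` into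
equivariant maps out of `(G ⨯ Z) ⨯ A`, inversely to restriction along `insertOne`. -/
noncomputable def untwist (A : GObject Gr) (Z : C) : (Gr.G ⨯ Z) ⨯ A.X ⟶ Z ⨯ A.X :=
  prod.lift (prod.fst ≫ prod.snd) (gact A (ginv (prod.fst ≫ prod.fst)) prod.snd)

lemma insertOne_untwist (A : GObject Gr) (Z : C) :
    insertOne Gr Z A.X ≫ untwist Gr A Z = 𝟙 _ := by
  apply Limits.prod.hom_ext <;> simp [insertOne, untwist, map_eq_lift, ginv_gone, gact_one]

lemma insertOne_untwist_assoc (A : GObject Gr) (Z : C) {W : C} (t : Z ⨯ A.X ⟶ W) :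
    insertOne Gr Z A.X ≫ untwist Gr A Z ≫ t = t := by
  rw [← Category.assoc, insertOne_untwist, Category.id_comp]

lemma productAction_untwist (A : GObject Gr) (Z : C) :
    productAction Gr (freeObj Gr Z) A ≫ untwist Gr A Z = prod.snd ≫ untwist Gr A Z := by
  apply Limits.prod.hom_ext
  · simp [productAction, untwist, freeObj, freeAct, map_eq_lift]
  · simp [productAction, untwist, freeObj, freeAct, map_eq_lift, gact_gact, ginv_gmul, gmul_assoc,
      ginv_mul, gmul_one]

lemma eq_untwist_insertOne_comp (A : GObject Gr) (Z : C) {W : C} (w : (Gr.G ⨯ Z) ⨯ A.X ⟶ W)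
    (hw : productAction Gr (freeObj Gr Z) A ≫ w = prod.snd ≫ w) :
    w = untwist Gr A Z ≫ insertOne Gr Z A.X ≫ w := by
  -- `((g, z), x) ↦ (g, (1, z), g⁻¹ x)` followed by the action is the identity
  have hsplit : prod.lift (prod.fst ≫ prod.fst) (untwist Gr A Z ≫ insertOne Gr Z A.X)
      ≫ productAction Gr (freeObj Gr Z) A = 𝟙 _ := by
    apply Limits.prod.hom_ext
    · apply Limits.prod.hom_ext <;>
        simp [productAction, untwist, insertOne, freeObj, freeAct, map_eq_lift, gmul_one]
    · simp [productAction, untwist, insertOne, freeObj, freeAct, map_eq_lift, gact_gact,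
        gmul_inv, gact_one]
  calc w = (prod.lift (prod.fst ≫ prod.fst) (untwist Gr A Z ≫ insertOne Gr Z A.X)
        ≫ productAction Gr (freeObj Gr Z) A) ≫ w := by rw [hsplit, Category.id_comp]
    _ = untwist Gr A Z ≫ insertOne Gr Z A.X ≫ w := by rw [Category.assoc, hw]; simp

lemma untwist_natural (A : GObject Gr) {W Z : C} (g : W ⟶ Z) :
    prod.map (prod.map (𝟙 Gr.G) g) (𝟙 A.X) ≫ untwist Gr A Z
      = untwist Gr A W ≫ prod.map g (𝟙 A.X) := by
  apply Limits.prod.hom_ext <;> simp [untwist, map_eq_lift]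

lemma map_freeAct_untwist (A : GObject Gr) (Z : C) :
    prod.map (freeAct Gr Z) (𝟙 A.X) ≫ untwist Gr A Z
      = untwist Gr A (Gr.G ⨯ Z) ≫ untwist Gr A Z := by
  apply Limits.prod.hom_ext
  · simp [untwist, freeAct, map_eq_lift]
  · simp [untwist, freeAct, map_eq_lift, gact_gact, ginv_gmul]

lemma map_act_comp_eq_untwist_comp (A B : GObject Gr) {W : C} (u : B.X ⨯ A.X ⟶ W)
    (hu : productAction Gr B A ≫ u = prod.snd ≫ u) :
    prod.map B.act (𝟙 A.X) ≫ u = untwist Gr A B.X ≫ u := by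
  have hsplit : prod.lift (prod.fst ≫ prod.fst) (untwist Gr A B.X) ≫ productAction Gr B A
      = prod.map B.act (𝟙 A.X) := by
    apply Limits.prod.hom_ext
    · simp [productAction, untwist, map_eq_lift, gact_gact, comp_act]
    · simp [productAction, untwist, map_eq_lift, gact_gact, gmul_inv, gact_one]
  rw [← hsplit, Category.assoc, hu]
  simp

lemma insertOne_natural {W Z : C} (g : W ⟶ Z) (X : C) :
    insertOne Gr W X ≫ prod.map (prod.map (𝟙 Gr.G) g) (𝟙 X)
      = prod.map g (𝟙 X) ≫ insertOne Gr Z X := by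
  apply Limits.prod.hom_ext <;> simp [insertOne, map_eq_lift]

lemma insertOne_map {Z W W' : C} (k : W ⟶ W') :
    insertOne Gr Z W ≫ prod.map (𝟙 (Gr.G ⨯ Z)) k = prod.map (𝟙 Z) k ≫ insertOne Gr Z W' := by
  apply Limits.prod.hom_ext <;> simp [insertOne, map_eq_lift]

noncomputable def invShuffle (Z X : C) : Z ⨯ (Gr.G ⨯ X) ⟶ (Gr.G ⨯ Z) ⨯ X :=
  prod.lift (prod.lift (ginv (prod.snd ≫ prod.fst)) prod.fst) (prod.snd ≫ prod.snd)

lemma invShuffle_map_untwist {A B : GObject Gr} (f : A.X ⟶ B.X) (Z : C) :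
    invShuffle Gr Z A.X ≫ prod.map (𝟙 (Gr.G ⨯ Z)) f ≫ untwist Gr B Z
      = prod.map (𝟙 Z) (prod.map (𝟙 Gr.G) f ≫ B.act) := by
  apply Limits.prod.hom_ext <;> simp [invShuffle, untwist, map_eq_lift, comp_act, ginv_ginv]

lemma invShuffle_untwist_map (A : GObject Gr) {W : C} (f : A.X ⟶ W) (Z : C) :
    invShuffle Gr Z A.X ≫ untwist Gr A Z ≫ prod.map (𝟙 Z) f = prod.map (𝟙 Z) (A.act ≫ f) := by
  apply Limits.prod.hom_ext
  · simp [invShuffle, untwist]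
  · simp [invShuffle, untwist, ginv_ginv]
    rw [← Category.assoc, comp_act]

end FreeGObject

section PointwiseLattice

variable {C : Type v} [Category.{v} C] [HasFiniteProducts C] {S : C}

lemma comp_elTop (top : ⊤_ C ⟶ S) {W W' : C} (c : W' ⟶ W) :
    c ≫ elTop top = (elTop top : W' ⟶ S) := by
  simp [elTop, ← Category.assoc]

lemma comp_elBot (bot : ⊤_ C ⟶ S) {W W' : C} (c : W' ⟶ W) :
    c ≫ elBot bot = (elBot bot : W' ⟶ S) := by
  simp [elBot, ← Category.assoc]

lemma comp_elMeet (meet : S ⨯ S ⟶ S) {W W' : C} (c : W' ⟶ W) (u v : W ⟶ S) :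
    c ≫ elMeet meet u v = elMeet meet (c ≫ u) (c ≫ v) := by
  simp [elMeet, prod.comp_lift_assoc]

lemma comp_elJoin (join : S ⨯ S ⟶ S) {W W' : C} (c : W' ⟶ W) (u v : W ⟶ S) :
    c ≫ elJoin join u v = elJoin join (c ≫ u) (c ≫ v) := by
  simp [elJoin, prod.comp_lift_assoc]

lemma powMap_isDLHom (top bot : ⊤_ C ⟶ S) (meet join : S ⨯ S ⟶ S) {X Y : C} (f : X ⟶ Y) :
    IsDLHom top bot meet join (powMap S f) :=
  ⟨fun _ => comp_elTop top _, fun _ => comp_elBot bot _, fun _ u v => comp_elMeet meet _ u v,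
    fun _ u v => comp_elJoin join _ u v⟩

end PointwiseLattice

section FreeRestriction

variable {S : C}

noncomputable def freeExt (A : GObject Gr) {Z : C} (u : Z ⨯ A.X ⟶ S) :
    (gpow Gr S A).obj (Opposite.op (freeObj Gr Z)) :=
  ⟨untwist Gr A Z ≫ u, by rw [← Category.assoc, productAction_untwist, Category.assoc]⟩

lemma insertOne_comp_freeExt (A : GObject Gr) {Z : C} (u : Z ⨯ A.X ⟶ S) :
    insertOne Gr Z A.X ≫ (freeExt A u).1 = u :=
  insertOne_untwist_assoc Gr A Z u

lemma freeExt_injective (A : GObject Gr) {Z : C} :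
    Function.Injective (freeExt (S := S) A (Z := Z)) := fun u v h => by
  rw [← insertOne_comp_freeExt A u, h, insertOne_comp_freeExt]

lemma eq_freeExt_insertOne_comp {A : GObject Gr} {Z : C}
    (x : (gpow Gr S A).obj (Opposite.op (freeObj Gr Z))) :
    x = freeExt A (insertOne Gr Z A.X ≫ x.1) :=
  Subtype.ext (eq_untwist_insertOne_comp Gr A Z x.1 x.2)

lemma gpow_map_freeMap_freeExt (A : GObject Gr) {W Z : C} (g : W ⟶ Z) (u : Z ⨯ A.X ⟶ S) :
    (gpow Gr S A).map (freeMap Gr g).op (freeExt A u) = freeExt A (prod.map g (𝟙 A.X) ≫ u) := by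
  apply Subtype.ext
  show prod.map (prod.map (𝟙 Gr.G) g) (𝟙 A.X) ≫ untwist Gr A Z ≫ u
    = untwist Gr A W ≫ prod.map g (𝟙 A.X) ≫ u
  rw [← Category.assoc, untwist_natural, Category.assoc]

lemma gpow_map_freeMulHom_freeExt (A : GObject Gr) (Z : C) (u : Z ⨯ A.X ⟶ S) :
    (gpow Gr S A).map (freeMulHom Gr Z).op (freeExt A u)
      = freeExt A (untwist Gr A Z ≫ u) := by
  apply Subtype.ext
  show prod.map (freeAct Gr Z) (𝟙 A.X) ≫ untwist Gr A Z ≫ u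
    = untwist Gr A (Gr.G ⨯ Z) ≫ untwist Gr A Z ≫ u
  rw [← Category.assoc, map_freeAct_untwist, Category.assoc]

lemma gpow_map_actHom (A B : GObject Gr) (x : (gpow Gr S A).obj (Opposite.op B)) :
    (gpow Gr S A).map (actHom Gr B).op x = freeExt A x.1 :=
  Subtype.ext (map_act_comp_eq_untwist_comp Gr A B x.1 x.2)

/-- The transformation `δ : S^Y ⟶ S^X` on `C` underlying `ε`, read off on free `G`-objects. -/
noncomputable def freeRestriction {Xa Yb : GObject Gr} (ε : gpow Gr S Yb ⟶ gpow Gr S Xa) :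
    pow S Yb.X ⟶ pow S Xa.X where
  app Z := TypeCat.ofHom fun u =>
    insertOne Gr Z.unop Xa.X ≫ (ε.app (Opposite.op (freeObj Gr Z.unop)) (freeExt Yb u)).1
  naturality Z W h := by
    ext u
    change Z.unop ⨯ Yb.X ⟶ S at u
    show insertOne Gr W.unop Xa.X ≫ (ε.app _ (freeExt Yb (prod.map h.unop (𝟙 Yb.X) ≫ u))).1
      = prod.map h.unop (𝟙 Xa.X) ≫ insertOne Gr Z.unop Xa.X ≫ (ε.app _ (freeExt Yb u)).1
    rw [← gpow_map_freeMap_freeExt, NatTrans.naturality_apply]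
    show insertOne Gr W.unop Xa.X ≫ prod.map (prod.map (𝟙 Gr.G) h.unop) (𝟙 Xa.X) ≫ _ = _
    rw [← Category.assoc, insertOne_natural, Category.assoc]

lemma freeRestriction_gpowMap {Xa Yb : GObject Gr} (k : Xa ⟶ Yb) :
    freeRestriction (gpowMap Gr S k) = powMap S k.f := by
  ext Z u
  change Z.unop ⨯ Yb.X ⟶ S at u
  show insertOne Gr Z.unop Xa.X ≫ prod.map (𝟙 _) k.f ≫ untwist Gr Yb Z.unop ≫ u
    = prod.map (𝟙 _) k.f ≫ u
  rw [← Category.assoc, insertOne_map, Category.assoc, insertOne_untwist_assoc]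

lemma app_freeExt_of_freeRestriction_eq {Xa Yb : GObject Gr} {ε : gpow Gr S Yb ⟶ gpow Gr S Xa}
    {f : Xa.X ⟶ Yb.X} (h : freeRestriction ε = powMap S f) {Z : C} (u : Z ⨯ Yb.X ⟶ S) :
    ε.app (Opposite.op (freeObj Gr Z)) (freeExt Yb u) = freeExt Xa (prod.map (𝟙 Z) f ≫ u) := by
  rw [eq_freeExt_insertOne_comp (ε.app _ _)]
  congr 1
  exact types_congr_hom (congr_app h (Opposite.op Z)) u

lemma untwist_comp_eq_of_freeRestriction_eq {Xa Yb : GObject Gr}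
    {ε : gpow Gr S Yb ⟶ gpow Gr S Xa} {f : Xa.X ⟶ Yb.X} (h : freeRestriction ε = powMap S f)
    {Z : C} (u : Z ⨯ Yb.X ⟶ S) :
    prod.map (𝟙 (Gr.G ⨯ Z)) f ≫ untwist Gr Yb Z ≫ u
      = untwist Gr Xa Z ≫ prod.map (𝟙 Z) f ≫ u := by
  have hnat := NatTrans.naturality_apply ε (freeMulHom Gr Z).op (freeExt Yb u)
  rw [gpow_map_freeMulHom_freeExt, app_freeExt_of_freeRestriction_eq h,
    app_freeExt_of_freeRestriction_eq h, gpow_map_freeMulHom_freeExt] at hnat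
  exact freeExt_injective Xa hnat

lemma powMap_act_comp_eq_of_freeRestriction_eq {Xa Yb : GObject Gr}
    {ε : gpow Gr S Yb ⟶ gpow Gr S Xa} {f : Xa.X ⟶ Yb.X} (h : freeRestriction ε = powMap S f) :
    powMap S (Xa.act ≫ f) = powMap S (prod.map (𝟙 Gr.G) f ≫ Yb.act) := by
  ext Z u
  change Z.unop ⨯ Yb.X ⟶ S at u
  show prod.map (𝟙 _) (Xa.act ≫ f) ≫ u = prod.map (𝟙 _) (prod.map (𝟙 Gr.G) f ≫ Yb.act) ≫ u
  rw [← invShuffle_untwist_map, ← invShuffle_map_untwist]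
  simp only [Category.assoc, untwist_comp_eq_of_freeRestriction_eq h]

lemma eq_gpowMap_of_freeRestriction_eq {Xa Yb : GObject Gr} {ε : gpow Gr S Yb ⟶ gpow Gr S Xa}
    {k : Xa ⟶ Yb} (h : freeRestriction ε = powMap S k.f) : ε = gpowMap Gr S k := by
  ext B x
  have hnat := NatTrans.naturality_apply ε (actHom Gr B.unop).op x
  rw [gpow_map_actHom, app_freeExt_of_freeRestriction_eq h, gpow_map_actHom] at hnat
  exact Subtype.ext (freeExt_injective Xa hnat).symm

end FreeRestriction

section FreeExtLattice

variable (A : GObject Gr) {Z : C}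

lemma freeExt_elTop :
    freeExt A (elTop (S := Sierp C) SC.top : Z ⨯ A.X ⟶ Sierp C)
      = gTop A (Opposite.op (freeObj Gr Z)) :=
  Subtype.ext (comp_elTop SC.top _)

lemma freeExt_elBot :
    freeExt A (elBot (S := Sierp C) SC.bot : Z ⨯ A.X ⟶ Sierp C)
      = gBot A (Opposite.op (freeObj Gr Z)) :=
  Subtype.ext (comp_elBot SC.bot _)

lemma freeExt_elMeet (u v : Z ⨯ A.X ⟶ Sierp C) :
    freeExt A (elMeet (S := Sierp C) SC.meet u v) = gMeet A _ (freeExt A u) (freeExt A v) :=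
  Subtype.ext (comp_elMeet SC.meet _ u v)

lemma freeExt_elJoin (u v : Z ⨯ A.X ⟶ Sierp C) :
    freeExt A (elJoin (S := Sierp C) SC.join u v) = gJoin A _ (freeExt A u) (freeExt A v) :=
  Subtype.ext (comp_elJoin SC.join _ u v)

end FreeExtLattice

lemma freeRestriction_isDLHom {Xa Yb : GObject Gr}
    (ε : gpow Gr (Sierp C) Yb ⟶ gpow Gr (Sierp C) Xa) (hε : GIsDLHom ε) :
    IsDLHom SC.top SC.bot SC.meet SC.join (freeRestriction ε) := by
  obtain ⟨hT, hB, hM, hJ⟩ := hε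
  refine ⟨fun Z => ?_, fun Z => ?_, fun Z u v => ?_, fun Z u v => ?_⟩
  · show insertOne Gr _ Xa.X ≫ (ε.app _ (freeExt Yb (elTop (S := Sierp C) SC.top))).1
      = elTop SC.top
    rw [freeExt_elTop, hT]
    exact comp_elTop SC.top _
  · show insertOne Gr _ Xa.X ≫ (ε.app _ (freeExt Yb (elBot (S := Sierp C) SC.bot))).1
      = elBot SC.bot
    rw [freeExt_elBot, hB]
    exact comp_elBot SC.bot _
  · change Z.unop ⨯ Yb.X ⟶ Sierp C at u v
    show insertOne Gr _ Xa.X ≫ (ε.app _ (freeExt Yb (elMeet (S := Sierp C) SC.meet u v))).1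
      = elMeet SC.meet (insertOne Gr _ Xa.X ≫ (ε.app _ (freeExt Yb u)).1)
          (insertOne Gr _ Xa.X ≫ (ε.app _ (freeExt Yb v)).1)
    rw [freeExt_elMeet, hM]
    exact comp_elMeet SC.meet _ _ _
  · change Z.unop ⨯ Yb.X ⟶ Sierp C at u v
    show insertOne Gr _ Xa.X ≫ (ε.app _ (freeExt Yb (elJoin (S := Sierp C) SC.join u v))).1
      = elJoin SC.join (insertOne Gr _ Xa.X ≫ (ε.app _ (freeExt Yb u)).1)
          (insertOne Gr _ Xa.X ≫ (ε.app _ (freeExt Yb v)).1)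
    rw [freeExt_elJoin, hJ]
    exact comp_elJoin SC.join _ _ _

lemma powMap_injective {X Y : C} {f g : X ⟶ Y}
    (h : powMap (Sierp C) f = powMap (Sierp C) g) : f = g := by
  obtain ⟨_, _, huniq⟩ :=
    SC.ax5 (powMap (Sierp C) f) (powMap_isDLHom SC.top SC.bot SC.meet SC.join f)
  exact (huniq f rfl).trans (huniq g h).symm

/-- Axiom 5 is `G`-stable: every natural transformation
`(S,π₂)^{(Y,b)} ⟶ (S,π₂)^{(X,a)}` on `[G,C]` that is a distributive lattice homomorphism
is `(S,π₂)^f` for a unique `G`-homomorphism `f : (X,a) ⟶ (Y,b)`. -/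
theorem gpow_ax5 {Xa Yb : GObject Gr}
    (ε : gpow Gr (Sierp C) Yb ⟶ gpow Gr (Sierp C) Xa) (hε : GIsDLHom ε) :
    ∃! f : Xa ⟶ Yb, ε = gpowMap Gr (Sierp C) f := by
  obtain ⟨f, hf, hf_unique⟩ := SC.ax5 (freeRestriction ε) (freeRestriction_isDLHom ε hε)
  have hequiv : Xa.act ≫ f = prod.map (𝟙 Gr.G) f ≫ Yb.act :=
    powMap_injective (powMap_act_comp_eq_of_freeRestriction_eq hf)
  refine ⟨⟨f, hequiv⟩, eq_gpowMap_of_freeRestriction_eq hf, ?_⟩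
  rintro k rfl
  exact GHom.ext (hf_unique k.f (freeRestriction_gpowMap k))
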